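/- If s_1, ..., s_{n+1} are i.i.d. continuous real random variables (so that ties occur with probability zero), then for α ∈ (0,1) with ⌈(1-α)(n+1)⌉ ≤ n, the split conformal coverage is also upper bounded: 1 - α ≤ P[s_{n+1} ≤ Q_α(\{s_i\}_{i=1}^n)] ≤ 1 - α + 1/(n+1), where Q_α is the ⌈(1-α)(n+1)⌉-th smallest of s_1,...,s_n. -/

import Mathlib

open MeasureTheory ProbabilityTheory

/-- The `k`-th smallest element of a finite multiset of reals
(i.e. the `k`-th order statistic, 1-indexed). -/
noncomputable def kthSmallestR (s : Multiset ℝ) (k : ℕ) : ℝ :=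
  (s.sort (· ≤ ·)).getD (k - 1) 0

/-!
Almost surely the `n + 1` scores are distinct, and then `s_{n+1} ≤ Q_α` says exactly that
`s_{n+1}` has rank at most `k = ⌈(1 - α)(n + 1)⌉` among all `n + 1` scores. An i.i.d. vector is
exchangeable, so every coordinate has the same probability `p` of having rank at most `k`; since
exactly `k` coordinates do, `(n + 1) p = k`. The coverage is therefore `k / (n + 1)`, which lies
between `1 - α` and `1 - α + 1 / (n + 1)` because `k` is a ceiling.
-/

open Finset Function
open scoped ENNReal

lemma List.Pairwise.countP_lt_le_iff {α : Type*} [LinearOrder α] {t : List α}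
    (ht : t.Pairwise (· ≤ ·)) {m : ℕ} (hm : m < t.length) (x : α) :
    t.countP (· < x) ≤ m ↔ x ≤ t[m] := by
  rw [← List.take_append_drop m t, List.pairwise_append, List.drop_eq_getElem_cons hm,
    List.pairwise_cons] at ht
  obtain ⟨-, ⟨hhead, -⟩, hcross⟩ := ht
  conv_lhs => rw [← List.take_append_drop m t, List.countP_append, List.drop_eq_getElem_cons hm,
    List.countP_cons]
  constructor
  · intro hcount
    by_contra! hlt
    have htake : (t.take m).countP (· < x) = m := by
      rw [List.countP_eq_length.mpr fun a ha => decide_eq_true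
        ((hcross a ha t[m] List.mem_cons_self).trans_lt hlt)]
      simp [hm.le]
    simp [htake, hlt] at hcount
  · intro hle
    have hdrop : (t.drop (m + 1)).countP (· < x) = 0 :=
      List.countP_eq_zero.mpr fun b hb => by simpa using hle.trans (hhead b hb)
    have htake : (t.take m).countP (· < x) ≤ m :=
      List.countP_le_length.trans (by simp)
    simp [hdrop, hle.not_gt, htake]

lemma le_kthSmallestR_iff (s : Multiset ℝ) {k : ℕ} (hk1 : 1 ≤ k) (hks : k ≤ s.card) (x : ℝ) :
    x ≤ kthSmallestR s k ↔ s.countP (· < x) < k := by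
  have hlen : k - 1 < (s.sort (· ≤ ·)).length := by rw [Multiset.length_sort]; omega
  rw [kthSmallestR, List.getD_eq_getElem _ _ hlen,
    ← (s.pairwise_sort (· ≤ ·)).countP_lt_le_iff hlen, ← Multiset.coe_countP,
    Multiset.sort_eq]
  omega

lemma Multiset.countP_ofFn {α : Type*} {N : ℕ} (g : Fin N → α) (p : α → Prop) [DecidablePred p] :
    Multiset.countP p ↑(List.ofFn g) = #{i | p (g i)} := by
  rw [← Fin.univ_val_map, Multiset.countP_map]
  rfl

namespace Tuple

variable {ι α : Type*} [Fintype ι] [LinearOrder α]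

def rank (x : ι → α) (i : ι) : ℕ := #{j | x j ≤ x i}

lemma rank_lt_rank {x : ι → α} {i j : ι} (h : x i < x j) : rank x i < rank x j := by
  refine card_lt_card ⟨fun k hk => ?_, fun hsub => ?_⟩
  · simp only [mem_filter, mem_univ, true_and] at hk ⊢
    exact hk.trans h.le
  · have := hsub (mem_filter.mpr ⟨mem_univ j, le_rfl⟩)
    exact (mem_filter.mp this).2.not_gt h

lemma rank_injective {x : ι → α} (hx : Injective x) : Injective (rank x) := by
  intro i j h
  apply hx
  by_contra hne
  rcases lt_or_gt_of_ne hne with hlt | hgt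
  · exact (rank_lt_rank hlt).ne h
  · exact (rank_lt_rank hgt).ne' h

lemma rank_mem_Icc (x : ι → α) (i : ι) : rank x i ∈ Icc 1 (Fintype.card ι) :=
  mem_Icc.mpr ⟨card_pos.mpr ⟨i, mem_filter.mpr ⟨mem_univ i, le_rfl⟩⟩, card_filter_le _ _⟩

lemma image_rank {x : ι → α} (hx : Injective x) : univ.image (rank x) = Icc 1 (Fintype.card ι) :=
  eq_of_subset_of_card_le (fun _ h => by
    obtain ⟨i, -, rfl⟩ := mem_image.mp h; exact rank_mem_Icc x i)
    (by rw [card_image_of_injective _ (rank_injective hx)]; simp)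

lemma card_rank_le {x : ι → α} (hx : Injective x) {k : ℕ} (hk : k ≤ Fintype.card ι) :
    #{i | rank x i ≤ k} = k := by
  calc #{i | rank x i ≤ k} = #((univ.image (rank x)).filter (· ≤ k)) := by
        rw [filter_image, card_image_of_injective _ (rank_injective hx)]
    _ = #(Icc 1 k) := by
        rw [image_rank hx]; congr 1; ext; simp only [mem_filter, mem_Icc]; omega
    _ = k := by simp

lemma rank_comp_perm (x : ι → α) (τ : Equiv.Perm ι) (i : ι) :
    rank (x ∘ τ) i = rank x (τ i) := by
  simp only [rank, card_filter]
  exact Equiv.sum_comp τ fun j => if x j ≤ x (τ i) then 1 else 0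

lemma rank_last {N : ℕ} {x : Fin (N + 1) → α} (hx : Injective x) :
    rank x (Fin.last N) = #{i : Fin N | x i.castSucc < x (Fin.last N)} + 1 := by
  simp only [rank, card_filter, Fin.sum_univ_castSucc, le_refl, if_true]
  congr 1
  refine sum_congr rfl fun i _ => ?_
  simp only [(hx.ne (Fin.castSucc_lt_last i).ne).le_iff_lt]

lemma measurable_rank (i : ι) : Measurable fun x : ι → ℝ => rank x i := by
  simp_rw [rank, card_filter]
  exact Finset.measurable_sum _ fun j _ =>
    Measurable.ite (measurableSet_le (measurable_pi_apply j) (measurable_pi_apply i))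
      measurable_const measurable_const

end Tuple

lemma le_kthSmallestR_ofFn_iff_rank_le {N k : ℕ} {x : Fin (N + 1) → ℝ} (hx : Injective x)
    (hk1 : 1 ≤ k) (hkN : k ≤ N) :
    x (Fin.last N) ≤ kthSmallestR ↑(List.ofFn fun i : Fin N => x i.castSucc) k ↔
      Tuple.rank x (Fin.last N) ≤ k := by
  rw [le_kthSmallestR_iff _ hk1 (by simpa using hkN), Multiset.countP_ofFn, Tuple.rank_last hx]
  omega

section Exchangeable

variable {Ω : Type*} [MeasurableSpace Ω]

def Exchangeable {ι α : Type*} [MeasurableSpace α] (P : Measure Ω) (X : Ω → ι → α) : Prop :=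
  ∀ τ : Equiv.Perm ι, P.map (fun ω => X ω ∘ τ) = P.map X

variable {P : Measure Ω}

lemma ProbabilityTheory.iIndepFun.exchangeable {ι α : Type*} [Fintype ι] [MeasurableSpace α]
    [IsProbabilityMeasure P] {s : ι → Ω → α} (hind : iIndepFun s P) (hs : ∀ i, Measurable (s i))
    {μ : Measure α} (hident : ∀ i, P.map (s i) = μ) : Exchangeable P fun ω i => s i ω := by
  intro τ
  have hτ := (hind.precomp τ.injective).map_fun_eq_pi_map fun i => (hs (τ i)).aemeasurable
  rw [hind.map_fun_eq_pi_map fun i => (hs i).aemeasurable]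
  simp only [hident] at hτ ⊢
  exact hτ

lemma ProbabilityTheory.IndepFun.measure_eq_eq_zero [IsFiniteMeasure P] {X Y : Ω → ℝ}
    (hXY : IndepFun X Y P) (hX : Measurable X) (hY : Measurable Y) {μ : Measure ℝ}
    [NullSingletonClass μ] (hYμ : P.map Y = μ) : P {ω | X ω = Y ω} = 0 := by
  have hdiag : MeasurableSet {p : ℝ × ℝ | p.1 = p.2} :=
    measurableSet_eq_fun measurable_fst measurable_snd
  have hfib (x : ℝ) : Prod.mk x ⁻¹' {p : ℝ × ℝ | p.1 = p.2} = {x} := by ext; simp [eq_comm]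
  rw [← Set.preimage_ofPred_eq (p := fun p : ℝ × ℝ => p.1 = p.2) (f := fun ω => (X ω, Y ω)),
    ← Measure.map_apply (hX.prodMk hY) hdiag,
    (indepFun_iff_map_prod_eq_prod_map_map hX.aemeasurable hY.aemeasurable).mp hXY,
    Measure.prod_apply hdiag]
  simp [hfib, hYμ]

lemma ProbabilityTheory.iIndepFun.ae_injective {ι : Type*} [Countable ι] [IsFiniteMeasure P]
    {s : ι → Ω → ℝ} (hind : iIndepFun s P) (hs : ∀ i, Measurable (s i)) {μ : Measure ℝ}
    [NullSingletonClass μ] (hident : ∀ i, P.map (s i) = μ) :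
    ∀ᵐ ω ∂P, Injective fun i => s i ω := by
  have hpair : ∀ i j, ∀ᵐ ω ∂P, s i ω = s j ω → i = j := by
    intro i j
    rcases eq_or_ne i j with rfl | hij
    · exact ae_of_all _ fun _ _ => rfl
    · filter_upwards [measure_eq_zero_iff_ae_notMem.mp
        ((hind.indepFun hij).measure_eq_eq_zero (hs i) (hs j) (hident j))] with ω hω h
      exact absurd h hω
  exact ae_all_iff.mpr fun i => ae_all_iff.mpr fun j => hpair i j

lemma Exchangeable.card_mul_measure_rank_le {ι : Type*} [Fintype ι] [IsProbabilityMeasure P]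
    {X : Ω → ι → ℝ} (hexch : Exchangeable P X) (hX : Measurable X)
    (hinj : ∀ᵐ ω ∂P, Injective (X ω)) {k : ℕ} (hk : k ≤ Fintype.card ι) (i : ι) :
    (Fintype.card ι : ℝ≥0∞) * P {ω | Tuple.rank (X ω) i ≤ k} = k := by
  have hmeas (j : ι) : MeasurableSet {x : ι → ℝ | Tuple.rank x j ≤ k} :=
    measurableSet_le (Tuple.measurable_rank j) measurable_const
  have hsame (j : ι) : P {ω | Tuple.rank (X ω) j ≤ k} = P {ω | Tuple.rank (X ω) i ≤ k} := by
    classical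
    have hpre : {ω | Tuple.rank (X ω) j ≤ k} =
        (fun ω => X ω ∘ Equiv.swap i j) ⁻¹' {x | Tuple.rank x i ≤ k} := by
      ext ω; simp [Tuple.rank_comp_perm]
    have hτ : Measurable fun ω => X ω ∘ Equiv.swap i j :=
      measurable_pi_lambda _ fun _ => (measurable_pi_apply _).comp hX
    rw [hpre, ← Measure.map_apply hτ (hmeas i), hexch, Measure.map_apply hX (hmeas i)]
    rfl
  have hcount : ∀ᵐ ω ∂P, ∑ j, {ω | Tuple.rank (X ω) j ≤ k}.indicator 1 ω = (k : ℝ≥0∞) := by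
    filter_upwards [hinj] with ω hω
    simp only [Set.indicator_apply, Set.mem_ofPred_eq, Pi.one_apply, sum_boole,
      Tuple.card_rank_le hω hk]
  calc (Fintype.card ι : ℝ≥0∞) * P {ω | Tuple.rank (X ω) i ≤ k}
      = ∑ j, P {ω | Tuple.rank (X ω) j ≤ k} := by simp [hsame]
    _ = ∫⁻ ω, ∑ j, {ω | Tuple.rank (X ω) j ≤ k}.indicator 1 ω ∂P := by
      have hmeasΩ (j : ι) : MeasurableSet {ω | Tuple.rank (X ω) j ≤ k} := hX (hmeas j)
      rw [lintegral_finsetSum _ fun j _ => measurable_one.indicator (hmeasΩ j)]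
      simp_rw [lintegral_indicator_one (hmeasΩ _)]
    _ = k := by rw [lintegral_congr_ae hcount, lintegral_const, measure_univ, mul_one]

end Exchangeable

lemma ENNReal.natCeil_mul_div_mem_Icc {r : ℝ} (hr : 0 ≤ r) (N : ℕ) :
    (⌈r * (N + 1)⌉₊ : ℝ≥0∞) / (N + 1) ∈
      Set.Icc (ENNReal.ofReal r) (ENNReal.ofReal (r + 1 / (N + 1))) := by
  have hN : (0 : ℝ) < N + 1 := N.cast_add_one_pos
  have hdiv : (⌈r * (N + 1)⌉₊ : ℝ≥0∞) / (N + 1) = ENNReal.ofReal (⌈r * (N + 1)⌉₊ / (N + 1)) := by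
    rw [ENNReal.ofReal_div_of_pos hN]
    norm_cast
  rw [hdiv]
  constructor <;> apply ENNReal.ofReal_le_ofReal
  · rw [le_div_iff₀ hN]
    exact Nat.le_ceil _
  · rw [div_le_iff₀ hN, add_mul, one_div_mul_cancel hN.ne']
    exact (Nat.ceil_lt_add_one (by positivity)).le

theorem stmt5 {Ω : Type*} [MeasureSpace Ω] [IsProbabilityMeasure (ℙ : Measure Ω)]
    (n : ℕ) (s : Fin (n + 1) → Ω → ℝ) (hmeas : ∀ i, Measurable (s i))
    -- i.i.d. with a common atomless (continuous) distribution μ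
    (μ : Measure ℝ) [NullSingletonClass μ]
    (hindep : iIndepFun s ℙ)
    (hident : ∀ i, Measure.map (s i) ℙ = μ)
    (α : ℝ) (hα : α ∈ Set.Ioo (0 : ℝ) 1)
    (hk : ⌈(1 - α) * (n + 1)⌉₊ ≤ n) :
    ENNReal.ofReal (1 - α) ≤
      ℙ {ω | s (Fin.last n) ω ≤
        kthSmallestR (Multiset.ofList (List.ofFn fun i : Fin n => s i.castSucc ω))
          ⌈(1 - α) * (n + 1)⌉₊} ∧
    ℙ {ω | s (Fin.last n) ω ≤
        kthSmallestR (Multiset.ofList (List.ofFn fun i : Fin n => s i.castSucc ω))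
          ⌈(1 - α) * (n + 1)⌉₊} ≤
      ENNReal.ofReal (1 - α + 1 / (n + 1)) := by
  obtain ⟨-, hα1⟩ := hα
  set k := ⌈(1 - α) * (n + 1)⌉₊
  have hk1 : 1 ≤ k := Nat.one_le_ceil_iff.mpr (mul_pos (sub_pos.mpr hα1) n.cast_add_one_pos)
  have hinj := hindep.ae_injective hmeas hident
  have hrank := (hindep.exchangeable hmeas hident).card_mul_measure_rank_le
    (measurable_pi_lambda _ hmeas) hinj (k := k) (by simp; omega) (Fin.last n)
  have hcover : ℙ {ω | s (Fin.last n) ω ≤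
      kthSmallestR (Multiset.ofList (List.ofFn fun i : Fin n => s i.castSucc ω)) k} =
      k / (n + 1) := by
    have hevent : {ω | s (Fin.last n) ω ≤
        kthSmallestR (Multiset.ofList (List.ofFn fun i : Fin n => s i.castSucc ω)) k} =ᵐ[ℙ]
        {ω | Tuple.rank (fun i => s i ω) (Fin.last n) ≤ k} :=
      hinj.mono fun ω hω => propext (le_kthSmallestR_ofFn_iff_rank_le hω hk1 hk)
    rw [measure_congr hevent, ENNReal.eq_div_iff (by simp) (by simp)]
    simpa using hrank
  rw [hcover]
  exact ENNReal.natCeil_mul_div_mem_Icc (sub_nonneg.mpr hα1.le) n
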